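/- For m ≥ 5 and n ≥ 2, the number of distinct Type I(b) tandems occurring in the Fibonacci array f_{m,n} equals D(m)·p(f_n); here the count of distinct Type I(b) tandems is the sum over all sizes (2r,l) with r,l ≥ 1 of the number of distinct 2r × l arrays X such that X occurs as a subarray of f_{m,n} and the top r × l half of X equals its bottom r × l half, D(m) is the number of distinct squares that are factors of the 1D Fibonacci word f_m, and p(f_n) is the number of distinct nonempty factors of f_n. -/

import Mathlib

/-- Fibonacci numbers: F(0)=1, F(1)=1, F(n+2)=F(n+1)+F(n). -/
def F : ℕ → ℕ
  | 0 => 1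
  | 1 => 1
  | n + 2 => F (n + 1) + F n

/-- Finite Fibonacci words over {a,b} coded as Fin 2 (a=0, b=1). -/
def fibWord : ℕ → List (Fin 2)
  | 0 => [0]
  | 1 => [1]
  | n + 2 => fibWord (n + 1) ++ fibWord n

/-- The Fibonacci arrays f_{m,n} over {a,b,c,d} coded as Fin 2 × Fin 2,
with a=(0,0), b=(0,1), c=(1,0), d=(1,1); `fibArr m n i j` is the (i,j) entry
(0-indexed, only indices i < F m, j < F n are meaningful). -/
def fibArr : ℕ → ℕ → ℕ → ℕ → Fin 2 × Fin 2
  | 0, 0, _, _ => (0, 0)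
  | 0, 1, _, _ => (0, 1)
  | 1, 0, _, _ => (1, 0)
  | 1, 1, _, _ => (1, 1)
  | 0, n + 2, i, j =>
      if j < F (n + 1) then fibArr 0 (n + 1) i j else fibArr 0 n i (j - F (n + 1))
  | 1, n + 2, i, j =>
      if j < F (n + 1) then fibArr 1 (n + 1) i j else fibArr 1 n i (j - F (n + 1))
  | m + 2, k, i, j =>
      if i < F (m + 1) then fibArr (m + 1) k i j else fibArr m k (i - F (m + 1)) j
  termination_by m n => (m, n)

/-- The r × l subarray of u with top-left entry at (i,j). -/
def subarr (u : ℕ → ℕ → Fin 2 × Fin 2) (i j r l : ℕ) : Fin r × Fin l → Fin 2 × Fin 2 :=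
  fun p => u (i + p.1.val) (j + p.2.val)

/-- Number of square occurrences in a finite word. -/
noncomputable def sqOcc (w : List (Fin 2)) : ℕ :=
  {p : ℕ × ℕ | 1 ≤ p.2 ∧ p.1 + 2 * p.2 ≤ w.length ∧
    ∀ t < p.2, w.getD (p.1 + t) 0 = w.getD (p.1 + p.2 + t) 0}.ncard

/-- R(n): number of square occurrences in f_n. -/
noncomputable def R (n : ℕ) : ℕ := sqOcc (fibWord n)

/-- Number of distinct nonempty factors of a word. -/
noncomputable def pFact (w : List (Fin 2)) : ℕ :=
  {v : List (Fin 2) | v ≠ [] ∧ v <:+: w}.ncard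

/-- D(n): number of distinct (nonempty) squares xx occurring as factors of f_n. -/
noncomputable def D (n : ℕ) : ℕ :=
  {x : List (Fin 2) | x ≠ [] ∧ x ++ x <:+: fibWord n}.ncard

/-- The r × c array X occurs as a subarray of the Fibonacci array f_{m,n}. -/
def occursIn (m n r c : ℕ) (X : Fin r × Fin c → Fin 2 × Fin 2) : Prop :=
  ∃ i j, i + r ≤ F m ∧ j + c ≤ F n ∧
    ∀ p : Fin r × Fin c, X p = fibArr m n (i + p.1.val) (j + p.2.val)

/-!
Unfolding the recursion gives `f_{m,n}(i, j) = (f_m(i), f_n(j))`: the array is the product of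
the word `f_m` down its rows and `f_n` along its columns. A subarray of `f_{m,n}` is therefore
the product of a factor of `f_m` with a factor of `f_n`, and it is a tandem exactly when the
factor of `f_m` is a square `xx`. The tandems thus correspond bijectively to the pairs
`(x, v)` with `xx` a factor of `f_m` and `v` a nonempty factor of `f_n`, the pair being read
off the first column and the first row.
-/

namespace List

variable {α : Type*}

theorem getD_take_drop (w : List α) (d : α) {i k n : ℕ} (hk : k < n) :
    ((w.drop i).take n).getD k d = w.getD (i + k) d := by
  simp [getD_eq_getElem?_getD, hk]

theorem take_drop_infix (w : List α) (i n : ℕ) : (w.drop i).take n <:+: w :=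
  (take_prefix _ _).isInfix.trans (drop_suffix _ _).isInfix

theorem infix_iff_exists_getD (d : α) {v w : List α} :
    v <:+: w ↔ ∃ i, i + v.length ≤ w.length ∧ ∀ k < v.length, w.getD (i + k) d = v.getD k d := by
  constructor
  · rintro ⟨s, t, rfl⟩
    refine ⟨s.length, by simp, fun k hk => ?_⟩
    rw [append_assoc, getD_append_right _ _ _ _ (by omega), Nat.add_sub_cancel_left,
      getD_append _ _ _ _ hk]
  · rintro ⟨i, hlen, h⟩
    suffices (w.drop i).take v.length = v from this ▸ take_drop_infix w i v.length
    refine ext_getElem (by simp; omega) fun k hk hk' => ?_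
    rw [← getD_eq_getElem _ d hk, ← getD_eq_getElem _ d hk', getD_take_drop _ _ hk', h k hk']

end List

theorem length_fibWord (n : ℕ) : (fibWord n).length = F n := by
  induction n using fibWord.induct <;> simp [fibWord, F, *]

theorem getD_fibWord_add_two (n j : ℕ) :
    (fibWord (n + 2)).getD j 0 =
      if j < F (n + 1) then (fibWord (n + 1)).getD j 0 else (fibWord n).getD (j - F (n + 1)) 0 := by
  rw [fibWord]
  split_ifs with h
  · exact List.getD_append _ _ _ _ (by rwa [length_fibWord])
  · rw [List.getD_append_right _ _ _ _ (by rw [length_fibWord]; omega), length_fibWord]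

theorem fibArr_eq_getD {m n i j : ℕ} (hi : i < F m) (hj : j < F n) :
    fibArr m n i j = ((fibWord m).getD i 0, (fibWord n).getD j 0) := by
  induction m, n, i, j using fibArr.induct with
  | case1 i j | case2 i j | case3 i j | case4 i j =>
    simp only [F, Nat.lt_one_iff] at hi hj
    subst hi hj
    simp [fibArr, fibWord]
  | case5 n i j h ih | case7 n i j h ih =>
    rw [fibArr, if_pos h, ih hi h, getD_fibWord_add_two, if_pos h]
  | case6 n i j h ih | case8 n i j h ih =>
    rw [F] at hj
    rw [fibArr, if_neg h, ih hi (by omega), getD_fibWord_add_two, if_neg h]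
  | case9 m k i j h ih =>
    rw [fibArr, if_pos h, ih h hj, getD_fibWord_add_two, if_pos h]
  | case10 m k i j h ih =>
    rw [F] at hi
    rw [fibArr, if_neg h, ih (by omega) hj, getD_fibWord_add_two, if_neg h]

theorem occursIn_iff {m n r c : ℕ} {X : Fin r × Fin c → Fin 2 × Fin 2} :
    occursIn m n r c X ↔ ∃ i j, i + r ≤ F m ∧ j + c ≤ F n ∧
      ∀ p : Fin r × Fin c, X p = ((fibWord m).getD (i + p.1) 0, (fibWord n).getD (j + p.2) 0) := by
  refine exists₂_congr fun i j => and_congr_right fun hi => and_congr_right fun hj => ?_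
  refine forall_congr' fun p => ?_
  rw [fibArr_eq_getD (by have := p.1.isLt; omega) (by have := p.2.isLt; omega)]

abbrev EvenHeightArray := (r : ℕ) × (l : ℕ) × (Fin (2 * r) × Fin l → Fin 2 × Fin 2)

def IsTandem {α : Type*} {r l : ℕ} (X : Fin (2 * r) × Fin l → α) : Prop :=
  ∀ (p : Fin r) (q : Fin l), X (⟨p, by omega⟩, q) = X (⟨p + r, by omega⟩, q)

def tandems (m n : ℕ) : Set EvenHeightArray :=
  {x | 1 ≤ x.1 ∧ 1 ≤ x.2.1 ∧ occursIn m n (2 * x.1) x.2.1 x.2.2 ∧ IsTandem x.2.2}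

def productTandem (x v : List (Fin 2)) : EvenHeightArray :=
  ⟨x.length, v.length, fun p => ((x ++ x).getD p.1 0, v.getD p.2 0)⟩

def tandemWords (s : EvenHeightArray) : List (Fin 2) × List (Fin 2) :=
  (List.ofFn fun p : Fin s.1 => if h : 0 < s.2.1 then (s.2.2 (⟨p, by omega⟩, ⟨0, h⟩)).1 else 0,
   List.ofFn fun q : Fin s.2.1 => if h : 0 < s.1 then (s.2.2 (⟨0, by omega⟩, q)).2 else 0)

theorem tandemWords_productTandem {x v : List (Fin 2)} (hx : x ≠ []) (hv : v ≠ []) :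
    tandemWords (productTandem x v) = (x, v) := by
  have hx' : 0 < x.length := List.length_pos_iff.2 hx
  have hv' : 0 < v.length := List.length_pos_iff.2 hv
  refine Prod.ext
    (List.ext_getElem (by simp [tandemWords, productTandem]) fun k _ (hk : k < x.length) => ?_)
    (List.ext_getElem (by simp [tandemWords, productTandem]) fun k _ hk => ?_)
  · simp [tandemWords, productTandem, hv', List.getElem?_append_left hk, hk]
  · simp [tandemWords, productTandem, hx']

theorem productTandem_eq {r l : ℕ} {X : Fin (2 * r) × Fin l → Fin 2 × Fin 2} {x v : List (Fin 2)}
    (hx : x.length = r) (hv : v.length = l)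
    (h : ∀ p : Fin (2 * r) × Fin l, X p = ((x ++ x).getD p.1 0, v.getD p.2 0)) :
    productTandem x v = ⟨r, l, X⟩ := by
  subst hx hv
  obtain rfl : X = _ := funext h
  rfl

theorem productTandem_mem_tandems {m n : ℕ} {x v : List (Fin 2)}
    (hx : x ≠ [] ∧ x ++ x <:+: fibWord m) (hv : v ≠ [] ∧ v <:+: fibWord n) :
    productTandem x v ∈ tandems m n := by
  obtain ⟨i, hi, hxx⟩ := (List.infix_iff_exists_getD 0).1 hx.2
  obtain ⟨j, hj, hvv⟩ := (List.infix_iff_exists_getD 0).1 hv.2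
  simp only [List.length_append, length_fibWord] at hi hj
  refine ⟨List.length_pos_iff.2 hx.1, List.length_pos_iff.2 hv.1,
    occursIn_iff.2 ⟨i, j, by simp only [productTandem]; omega, hj, fun p => ?_⟩, fun p q => ?_⟩
  · have hp : (p.1 : ℕ) < (x ++ x).length := by rw [List.length_append, ← two_mul]; exact p.1.isLt
    rw [hxx p.1 hp, hvv p.2 p.2.isLt]
    rfl
  · change ((x ++ x).getD p 0, v.getD q 0) = ((x ++ x).getD (p + x.length) 0, v.getD q 0)
    rw [List.getD_append _ _ _ _ p.isLt, List.getD_append_right _ _ _ _ (by omega),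
      Nat.add_sub_cancel]

theorem exists_productTandem_of_mem_tandems {m n : ℕ} {s : EvenHeightArray}
    (hs : s ∈ tandems m n) :
    ∃ x v, (x ≠ [] ∧ x ++ x <:+: fibWord m) ∧ (v ≠ [] ∧ v <:+: fibWord n) ∧
      productTandem x v = s := by
  obtain ⟨r, l, X⟩ := s
  obtain ⟨hr, hl, hocc, hT⟩ := hs
  obtain ⟨i, j, hi, hj, hX⟩ := occursIn_iff.1 hocc
  dsimp only at hr hl hT hi hj hX
  have hperiod (k : ℕ) (hk : k < r) :
      (fibWord m).getD (i + k + r) 0 = (fibWord m).getD (i + k) 0 := by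
    simpa [hX, add_assoc] using congrArg Prod.fst (hT ⟨k, hk⟩ ⟨0, hl⟩).symm
  set x := ((fibWord m).drop i).take r with hx
  have hxlen : x.length = r := by simp [x, length_fibWord]; omega
  have hsq (k : ℕ) (hk : k < 2 * r) : (fibWord m).getD (i + k) 0 = (x ++ x).getD k 0 := by
    rcases lt_or_ge k r with hkr | hkr
    · rw [List.getD_append _ _ _ _ (by omega), hx, List.getD_take_drop _ _ hkr]
    · rw [List.getD_append_right _ _ _ _ (by omega), hxlen, hx,
        List.getD_take_drop _ _ (by omega), ← hperiod (k - r) (by omega)]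
      congr 1
      omega
  refine ⟨x, ((fibWord n).drop j).take l,
    ⟨List.ne_nil_of_length_pos (by omega), (List.infix_iff_exists_getD 0).2
      ⟨i, by simp [hxlen, length_fibWord]; omega, by simpa [hxlen, two_mul] using hsq⟩⟩,
    ⟨List.ne_nil_of_length_pos (by simp [length_fibWord]; omega), List.take_drop_infix _ _ _⟩,
    productTandem_eq hxlen (by simp [length_fibWord]; omega) fun p => ?_⟩
  rw [hX, hsq _ p.1.isLt, List.getD_take_drop _ _ p.2.isLt]

theorem tandems_eq_image (m n : ℕ) :
    tandems m n = (fun w => productTandem w.1 w.2) ''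
      ({x | x ≠ [] ∧ x ++ x <:+: fibWord m} ×ˢ {v | v ≠ [] ∧ v <:+: fibWord n}) := by
  ext s
  constructor
  · intro hs
    obtain ⟨x, v, hx, hv, rfl⟩ := exists_productTandem_of_mem_tandems hs
    exact ⟨(x, v), ⟨hx, hv⟩, rfl⟩
  · rintro ⟨⟨x, v⟩, ⟨hx, hv⟩, rfl⟩
    exact productTandem_mem_tandems hx hv

/-- For m ≥ 5 and n ≥ 2, the number of distinct Type I(b) tandems in f_{m,n}
(counted over all sizes (2r,l), r,l ≥ 1: distinct 2r × l arrays X occurring in f_{m,n}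
whose top r × l half equals its bottom r × l half) equals D(m)·p(f_n). -/
theorem stmt9 (m n : ℕ) :
    {x : (r : ℕ) × (l : ℕ) × (Fin (2 * r) × Fin l → Fin 2 × Fin 2) |
      1 ≤ x.1 ∧ 1 ≤ x.2.1 ∧ occursIn m n (2 * x.1) x.2.1 x.2.2 ∧
      ∀ (p : Fin x.1) (q : Fin x.2.1),
        x.2.2 (⟨p.val, by have := p.isLt; omega⟩, q)
          = x.2.2 (⟨p.val + x.1, by have := p.isLt; omega⟩, q)}.ncard
      = D m * pFact (fibWord n) := by
  change (tandems m n).ncard = _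
  rw [tandems_eq_image, Set.InjOn.ncard_image, Set.ncard_prod]
  · rfl
  · rintro ⟨x, v⟩ ⟨hx, hv⟩ ⟨x', v'⟩ ⟨hx', hv'⟩ h
    simpa [tandemWords_productTandem hx.1 hv.1, tandemWords_productTandem hx'.1 hv'.1]
      using congrArg tandemWords h
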